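/- arXiv:1611.07354 — 2 statements merged into one kernel-verified Lean document; each statement's English description precedes it below -/
import Mathlib

section
/- For every integer d ≥ 2, every dual graph of type (d, d+6) has diameter at most 14; that is, μ(d, d+6) ≤ 14. -/
open SimpleGraph

/-- The graph on a family `V` of subsets of `{1,…,n}` in which two distinct
members are adjacent iff their intersection has `d - 1` elements
(property (ii) of a dual graph of type `(d,n)`). -/
def adjGraph (n d : ℕ) (V : Finset (Finset (Fin n))) :
    SimpleGraph {u : Finset (Fin n) // u ∈ V} where
  Adj u v := u ≠ v ∧ (u.1 ∩ v.1).card = d - 1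
  symm := by
    constructor
    rintro u v ⟨h1, h2⟩
    exact ⟨h1.symm, by rwa [Finset.inter_comm]⟩
  loopless := ⟨fun u h => h.1 rfl⟩

/-- `V` is (the vertex set of) a dual graph of type `(d,n)`:
a nonempty family of `d`-element subsets of `{1,…,n}` such that, with adjacency
given by property (ii), any two vertices `u`, `v` are joined by a walk all of
whose vertices contain `u ∩ v` (property (i)). -/
structure IsDualGraph (d n : ℕ) (V : Finset (Finset (Fin n))) : Prop where
  nonempty : V.Nonempty
  card_eq : ∀ u ∈ V, u.card = d
  locally_connected : ∀ u v : {x : Finset (Fin n) // x ∈ V},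
    ∃ w : (adjGraph n d V).Walk u v, ∀ x ∈ w.support, u.1 ∩ v.1 ⊆ x.1


/-!
Write `k = d - |u ∩ v|`; as `n = d + 6` we have `k ≤ 6`, and `6 - k` points lie outside
`u ∪ v`. By induction on `k`, `u` and `v` are joined through vertices containing `u ∩ v` by a
walk of length at most `0, 1, 6, 8, 11, 13, 14` for `k = 0, …, 6`.

For `k = 2` such walks are walks in the link of `c = u ∩ v`, the graph on the points outside `c`
in which `a, b` are adjacent when `c ∪ {a, b}` is a vertex. A shortest link walk from `u \ c` to
`v \ c` visits distinct points, none of them in `u` or `v` except its ends; with the two remaining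
points of `u \ c` and `v \ c` these are at most the `8` points outside `c`, so it has at most `5`
edges.

For `k ≥ 3` follow a walk given by property (i) up to the last vertex `p` disjoint from `v \ u`
and its successor `m`. The points of `p \ u` lie outside `u ∪ v`, so `|u ∩ p| ≥ d - (6 - k)`,
while `|m ∩ v| > |u ∩ v|`. For `k = 3` this is not enough: if no vertex within distance `2` of
`u` meets `v \ u` (and symmetrically), the interior points of short link walks near `u` or `v`
are confined to the three points outside `u ∪ v`, and counting them bounds the link walks used.
-/

open Finset

namespace Finset

variable {α : Type*} [DecidableEq α]

theorem card_add_two_le_of_mem_sdiff {S T : Finset α} {p q : α} (hpq : p ≠ q) (hp : p ∈ S \ T)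
    (hq : q ∈ S \ T) (hTS : T ⊆ S) : T.card + 2 ≤ S.card := by
  have hsub : insert p (insert q T) ⊆ S :=
    insert_subset (mem_sdiff.1 hp).1 (insert_subset (mem_sdiff.1 hq).1 hTS)
  have hpT : p ∉ insert q T := by simpa [hpq] using (mem_sdiff.1 hp).2
  have := card_le_card hsub
  rwa [card_insert_of_notMem hpT, card_insert_of_notMem (mem_sdiff.1 hq).2] at this

theorem disjoint_sdiff_inter_sdiff_inter (s t : Finset α) :
    Disjoint (s \ (s ∩ t)) (t \ (s ∩ t)) := by
  rw [sdiff_inter_self_left, sdiff_inter_self_right]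
  exact disjoint_sdiff_sdiff

theorem inter_insert_insert_eq {s c : Finset α} {a b : α} (ha : a ∈ s) (hb : b ∉ s)
    (hc : c ⊆ s) : s ∩ insert a (insert b c) = insert a c := by
  rw [inter_insert_of_mem ha, inter_insert_of_notMem hb, inter_eq_right.2 hc]

theorem card_inter_eq_add_of_inter_subset {s t r : Finset α} (h : s ∩ t ⊆ r) :
    (s ∩ r).card = (s ∩ t).card + (r ∩ (s \ t)).card := by
  rw [← card_union_of_disjoint]
  · congr 1
    ext a
    have := @h a
    simp only [mem_inter, mem_sdiff, mem_union] at this ⊢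
    tauto
  · rw [disjoint_left]
    intro a
    simp only [mem_inter, mem_sdiff]
    tauto

theorem card_eq_add_of_inter_subset [Fintype α] {s t r : Finset α} (h : s ∩ t ⊆ r) :
    r.card =
      (s ∩ t).card + (r ∩ (s \ t)).card + (r ∩ (t \ s)).card + (r ∩ (s ∪ t)ᶜ).card := by
  have hsplit := card_inter_add_card_sdiff r s
  have hs := card_inter_eq_add_of_inter_subset h
  have hrest : (r \ s).card = (r ∩ (t \ s)).card + (r ∩ (s ∪ t)ᶜ).card := by
    rw [← card_union_of_disjoint]
    · congr 1
      ext a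
      simp only [mem_inter, mem_sdiff, mem_union, mem_compl]
      tauto
    · rw [disjoint_left]
      intro a
      simp only [mem_inter, mem_sdiff, mem_union, mem_compl]
      tauto
  rw [inter_comm r s] at hsplit
  omega

end Finset

namespace SimpleGraph

variable {α : Type*} {G : SimpleGraph α} {P Q : α → Prop} {L M : ℕ} {x y z : α}

variable (G) in
def ReachableWithin (P : α → Prop) (L : ℕ) (x y : α) : Prop :=
  ∃ p : G.Walk x y, p.length ≤ L ∧ ∀ z ∈ p.support, P z

namespace ReachableWithin

theorem refl (hx : P x) : G.ReachableWithin P L x x :=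
  ⟨.nil, L.zero_le, by simpa using hx⟩

theorem of_adj (h : G.Adj x y) (hx : P x) (hy : P y) : G.ReachableWithin P 1 x y :=
  ⟨h.toWalk, by simp, by simp [hx, hy]⟩

theorem right (h : G.ReachableWithin P L x y) : P y :=
  let ⟨p, _, hp⟩ := h
  hp y p.end_mem_support

theorem symm (h : G.ReachableWithin P L x y) : G.ReachableWithin P L y x :=
  let ⟨p, hl, hp⟩ := h
  ⟨p.reverse, by simpa using hl, fun z hz => hp z (by simpa using hz)⟩

theorem trans (h₁ : G.ReachableWithin P L x y) (h₂ : G.ReachableWithin P M y z) :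
    G.ReachableWithin P (L + M) x z := by
  obtain ⟨p, hp, hps⟩ := h₁
  obtain ⟨q, hq, hqs⟩ := h₂
  refine ⟨p.append q, by rw [Walk.length_append]; omega, fun t ht => ?_⟩
  rcases (Walk.mem_support_append_iff p q).1 ht with h | h
  exacts [hps t h, hqs t h]

theorem mono (h : G.ReachableWithin P L x y) (hPQ : ∀ z, P z → Q z) (hLM : L ≤ M) :
    G.ReachableWithin Q M x y :=
  let ⟨p, hl, hp⟩ := h
  ⟨p, hl.trans hLM, fun z hz => hPQ z (hp z hz)⟩

theorem mono_length (h : G.ReachableWithin P L x y) (hLM : L ≤ M) : G.ReachableWithin P M x y :=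
  h.mono (fun _ => id) hLM

theorem edist_le (h : G.ReachableWithin P L x y) : G.edist x y ≤ L :=
  let ⟨p, hl, _⟩ := h
  (SimpleGraph.edist_le p).trans (by exact_mod_cast hl)

end ReachableWithin

theorem Walk.exists_adj_first_entry {x y : α} (p : G.Walk x y) (hp : ∀ z ∈ p.support, P z)
    (hx : ¬ Q x) (hy : Q y) :
    ∃ a b, P a ∧ P b ∧ ¬ Q a ∧ Q b ∧ G.Adj a b ∧
      (a = x ∨ ∃ c, P c ∧ ¬ Q c ∧ G.Adj c a) := by
  induction p with
  | nil => exact absurd hy hx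
  | @cons x z y h p ih =>
    have hz : P z := hp z (by simp)
    by_cases hQz : Q z
    · exact ⟨x, z, hp x (by simp), hz, hx, hQz, h, Or.inl rfl⟩
    obtain ⟨a, b, ha, hb, hQa, hQb, hab, hpred⟩ :=
      ih (fun t ht => hp t (by simp [ht])) hQz hy
    refine ⟨a, b, ha, hb, hQa, hQb, hab, Or.inr ?_⟩
    rcases hpred with rfl | hc
    · exact ⟨x, hp x (by simp), hx, h⟩
    · exact hc

end SimpleGraph

namespace DualGraph

section Link

variable {n d : ℕ} {V : Finset (Finset (Fin n))}
  {x y z p m : {s : Finset (Fin n) // s ∈ V}} {w c B : Finset (Fin n)} {L : ℕ}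

abbrev Joined (d : ℕ) (w : Finset (Fin n)) (L : ℕ) (x y : {s : Finset (Fin n) // s ∈ V}) :
    Prop :=
  (adjGraph n d V).ReachableWithin (fun z => w ⊆ z.1) L x y

theorem Joined.anti {w' : Finset (Fin n)} (h : Joined d w L x y) (hw : w' ⊆ w) :
    Joined d w' L x y :=
  h.mono (fun _ hz => hw.trans hz) le_rfl

def Avoids (d : ℕ) (w : Finset (Fin n)) (L : ℕ) (x : {s : Finset (Fin n) // s ∈ V})
    (B : Finset (Fin n)) : Prop :=
  ∀ z, Joined d w L x z → Disjoint z.1 B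

theorem eq_of_le_card_inter (hV : IsDualGraph d n V) (h : d ≤ (x.1 ∩ y.1).card) : x = y := by
  have hx := hV.card_eq x.1 x.2
  have hy := hV.card_eq y.1 y.2
  have h₁ : x.1 ∩ y.1 = x.1 := eq_of_subset_of_card_le inter_subset_left (by omega)
  have h₂ : x.1 ∩ y.1 = y.1 := eq_of_subset_of_card_le inter_subset_right (by omega)
  exact Subtype.ext (h₁.symm.trans h₂)

theorem joined_of_le_card_inter_add_one (hV : IsDualGraph d n V)
    (h : d ≤ (x.1 ∩ y.1).card + 1) : Joined d (x.1 ∩ y.1) 1 x y := by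
  by_cases hxy : x = y
  · subst hxy
    exact .refl inter_subset_left
  · have := mt (eq_of_le_card_inter hV) hxy
    exact .of_adj ⟨hxy, by omega⟩ inter_subset_left inter_subset_right

theorem card_inter_lt_card_inter {b : Fin n} (hz : x.1 ∩ y.1 ⊆ z.1) (hb : b ∈ z.1)
    (hby : b ∈ y.1 \ x.1) : (x.1 ∩ y.1).card < (z.1 ∩ y.1).card := by
  refine card_lt_card ((ssubset_iff_of_subset (subset_inter hz inter_subset_right)).2 ⟨b, ?_⟩)
  simp only [mem_sdiff, mem_inter] at hby ⊢
  tauto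

theorem subset_insert_of_adj (hV : IsDualGraph d n V) {b : Fin n}
    (hadj : (adjGraph n d V).Adj p m) (hb : b ∈ m.1) (hbp : b ∉ p.1) :
    m.1 ⊆ insert b p.1 := by
  have hsplit := card_sdiff_add_card_inter m.1 p.1
  have hm := hV.card_eq m.1 m.2
  have hp := hV.card_eq p.1 p.2
  have hmp : (m.1 ∩ p.1).card = d - 1 := by rw [inter_comm]; exact hadj.2
  have hd : 1 ≤ d := hm ▸ card_pos.2 ⟨b, hb⟩
  obtain ⟨a, ha⟩ := card_eq_one.1 (show (m.1 \ p.1).card = 1 by omega)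
  have hba : b ∈ m.1 \ p.1 := mem_sdiff.2 ⟨hb, hbp⟩
  intro t ht
  by_cases htp : t ∈ p.1
  · exact mem_insert_of_mem htp
  · have htb : t ∈ m.1 \ p.1 := mem_sdiff.2 ⟨ht, htp⟩
    rw [ha, mem_singleton] at htb hba
    rw [htb, ← hba]
    exact mem_insert_self _ _

theorem sdiff_subset_compl_union (hp : Disjoint p.1 (y.1 \ x.1)) :
    p.1 \ x.1 ⊆ (x.1 ∪ y.1)ᶜ := by
  intro t ht
  have := disjoint_left.1 hp (mem_sdiff.1 ht).1
  simp only [mem_sdiff, mem_compl, mem_union] at ht this ⊢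
  tauto

theorem le_card_inter_add_card_compl (hV : IsDualGraph d n V)
    (hp : Disjoint p.1 (y.1 \ x.1)) : d ≤ (x.1 ∩ p.1).card + (x.1 ∪ y.1)ᶜ.card := by
  have hsplit := card_inter_add_card_sdiff p.1 x.1
  have := card_le_card (sdiff_subset_compl_union hp)
  rw [inter_comm, hV.card_eq p.1 p.2] at hsplit
  omega

theorem sdiff_nonempty_of_card_inter_lt (hV : IsDualGraph d n V) (h : (x.1 ∩ y.1).card < d) :
    (x.1 \ y.1).Nonempty := by
  have := card_sdiff_add_card_inter x.1 y.1
  rw [← card_pos]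
  rw [hV.card_eq x.1 x.2] at this
  omega

theorem exists_adj_first_meet (hV : IsDualGraph d n V) (hyx : (y.1 \ x.1).Nonempty) :
    ∃ p m : {s : Finset (Fin n) // s ∈ V}, x.1 ∩ y.1 ⊆ p.1 ∧ x.1 ∩ y.1 ⊆ m.1 ∧
      Disjoint p.1 (y.1 \ x.1) ∧ ¬ Disjoint m.1 (y.1 \ x.1) ∧ (adjGraph n d V).Adj p m ∧
      (p = x ∨ ∃ z : {s : Finset (Fin n) // s ∈ V}, x.1 ∩ y.1 ⊆ z.1 ∧
        Disjoint z.1 (y.1 \ x.1) ∧ (adjGraph n d V).Adj z p) := by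
  obtain ⟨walk, hwalk⟩ := hV.locally_connected x y
  have hy : ¬ Disjoint y.1 (y.1 \ x.1) := by
    rw [not_disjoint_iff]
    obtain ⟨b, hb⟩ := hyx
    exact ⟨b, (mem_sdiff.1 hb).1, hb⟩
  simpa only [not_not] using
    walk.exists_adj_first_entry (Q := fun z => ¬ Disjoint z.1 (y.1 \ x.1)) hwalk
      (not_not.2 disjoint_sdiff) hy

theorem exists_adj_closer (hV : IsDualGraph d n V) (h : (x.1 ∩ y.1).card < d) :
    ∃ p m : {s : Finset (Fin n) // s ∈ V}, x.1 ∩ y.1 ⊆ p.1 ∧ x.1 ∩ y.1 ⊆ m.1 ∧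
      Disjoint p.1 (y.1 \ x.1) ∧ (adjGraph n d V).Adj p m ∧
      (x.1 ∩ y.1).card < (m.1 ∩ y.1).card := by
  obtain ⟨p, m, hwp, hwm, hpv, hmv, hadj, -⟩ :=
    exists_adj_first_meet hV (sdiff_nonempty_of_card_inter_lt hV (by rwa [inter_comm]))
  obtain ⟨b, hbm, hby⟩ := not_disjoint_iff.1 hmv
  exact ⟨p, m, hwp, hwm, hpv, hadj, card_inter_lt_card_inter hwm hbm hby⟩

structure IsLinkChain (V : Finset (Finset (Fin n))) (c x y : Finset (Fin n)) (k : ℕ)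
    (q : ℕ → Fin n) : Prop where
  start_mem : q 0 ∈ x
  end_mem : q k ∈ y
  notMem : ∀ i ≤ k, q i ∉ c
  insert_mem : ∀ i < k, insert (q i) (insert (q (i + 1)) c) ∈ V

namespace IsLinkChain

variable {x y z : Finset (Fin n)} {k i j : ℕ} {q : ℕ → Fin n}

theorem cons (h : IsLinkChain V c z y k q) {a : Fin n} (ha : a ∈ x \ c)
    (hV : insert a (insert (q 0) c) ∈ V) :
    IsLinkChain V c x y (k + 1) (fun | 0 => a | i + 1 => q i) where
  start_mem := (mem_sdiff.1 ha).1
  end_mem := h.end_mem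
  notMem
    | 0, _ => (mem_sdiff.1 ha).2
    | i + 1, hi => h.notMem i (by omega)
  insert_mem
    | 0, _ => hV
    | i + 1, hi => h.insert_mem i (by omega)

theorem take (h : IsLinkChain V c x y k q) (hi : i ≤ k) (hy : q i ∈ y) :
    IsLinkChain V c x y i q where
  start_mem := h.start_mem
  end_mem := hy
  notMem j hj := h.notMem j (by omega)
  insert_mem j hj := h.insert_mem j (by omega)

theorem drop (h : IsLinkChain V c x y k q) (hi : i ≤ k) (hx : q i ∈ x) :
    IsLinkChain V c x y (k - i) (fun t => q (t + i)) where
  start_mem := by simpa using hx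
  end_mem := by simpa [Nat.sub_add_cancel hi] using h.end_mem
  notMem j hj := h.notMem (j + i) (by omega)
  insert_mem j hj := by
    simpa [Nat.add_right_comm j 1 i] using h.insert_mem (j + i) (by omega)

/-- Cutting out the loop between two visits `i < j` of the same point. -/
theorem shortcut (h : IsLinkChain V c x y k q) (hij : i < j) (hj : j ≤ k) (heq : q i = q j) :
    IsLinkChain V c x y (k - (j - i)) (fun t => if t ≤ i then q t else q (t + (j - i))) where
  start_mem := by simpa using h.start_mem
  end_mem := by
    by_cases hk : k - (j - i) ≤ i
    · rw [if_pos hk, show k - (j - i) = i by omega, heq, show j = k by omega]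
      exact h.end_mem
    · rw [if_neg hk, Nat.sub_add_cancel (by omega)]
      exact h.end_mem
  notMem t ht := by
    split_ifs
    · exact h.notMem t (by omega)
    · exact h.notMem _ (by omega)
  insert_mem t ht := by
    rcases lt_trichotomy t i with hti | rfl | hti
    · rw [if_pos hti.le, if_pos (show t + 1 ≤ i by omega)]
      exact h.insert_mem t (by omega)
    · rw [if_pos le_rfl, if_neg (by omega), heq, show t + 1 + (j - t) = j + 1 by omega]
      exact h.insert_mem j (by omega)
    · rw [if_neg (by omega), if_neg (by omega), show t + 1 + (j - i) = t + (j - i) + 1 by omega]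
      exact h.insert_mem _ (by omega)

end IsLinkChain

theorem exists_isLinkChain (hV : IsDualGraph d n V) (hc : c.card + 2 = d) :
    ∀ {x y : {s : Finset (Fin n) // s ∈ V}} (p : (adjGraph n d V).Walk x y),
      (∀ z ∈ p.support, c ⊆ z.1) →
        ∀ a ∈ x.1 \ c, ∃ k q, IsLinkChain V c x.1 y.1 k q ∧ q 0 = a
  | x, _, .nil, _, a, ha =>
    ⟨0, fun _ => a, ⟨(mem_sdiff.1 ha).1, (mem_sdiff.1 ha).1, fun _ _ => (mem_sdiff.1 ha).2,
      fun _ hi => absurd hi (Nat.not_lt_zero _)⟩, rfl⟩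
  | x, _, .cons (v := z) hxz p, hp, a, ha => by
    have hcx : c ⊆ x.1 := hp x (by simp)
    have hcz : c ⊆ z.1 := hp z (by simp)
    obtain ⟨b, hb⟩ : ((x.1 ∩ z.1) \ c).Nonempty := by
      rw [← card_pos, card_sdiff_of_subset (subset_inter hcx hcz), hxz.2]
      omega
    obtain ⟨k, q, hq, hq0⟩ := exists_isLinkChain hV hc p (fun t ht => hp t (by simp [ht])) b
      (by simp only [mem_sdiff, mem_inter] at hb ⊢; tauto)
    by_cases hab : a = b
    · subst hab
      exact ⟨k, q, { hq with start_mem := hq0 ▸ (mem_sdiff.1 ha).1 }, hq0⟩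
    have hx : insert a (insert b c) = x.1 := by
      refine eq_of_subset_of_card_le ?_ ?_
      · simp only [mem_sdiff, mem_inter] at ha hb
        exact insert_subset ha.1 (insert_subset hb.1.1 hcx)
      · rw [hV.card_eq x.1 x.2, card_insert_of_notMem, card_insert_of_notMem (mem_sdiff.1 hb).2]
        · omega
        · simp only [mem_insert, not_or]
          exact ⟨hab, (mem_sdiff.1 ha).2⟩
    exact ⟨k + 1, _, hq.cons ha (by rw [hq0, hx]; exact x.2), rfl⟩

structure LinkGeodesic (V : Finset (Finset (Fin n))) (c : Finset (Fin n))
    (x y : {s : Finset (Fin n) // s ∈ V}) where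
  length : ℕ
  point : ℕ → Fin n
  isLinkChain : IsLinkChain V c x.1 y.1 length point
  length_le : ∀ k q, IsLinkChain V c x.1 y.1 k q → length ≤ k

theorem nonempty_linkGeodesic (hV : IsDualGraph d n V) (hc : c.card + 2 = d) (hcx : c ⊆ x.1)
    (hcy : c ⊆ y.1) : Nonempty (LinkGeodesic V c x y) := by
  classical
  obtain ⟨walk, hwalk⟩ := hV.locally_connected x y
  obtain ⟨a, ha⟩ : (x.1 \ c).Nonempty := by
    rw [← card_pos, card_sdiff_of_subset hcx, hV.card_eq x.1 x.2]
    omega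
  have hex : ∃ k q, IsLinkChain V c x.1 y.1 k q := by
    obtain ⟨k, q, hq, -⟩ :=
      exists_isLinkChain hV hc walk (fun z hz => (subset_inter hcx hcy).trans (hwalk z hz)) a ha
    exact ⟨k, q, hq⟩
  obtain ⟨q, hq⟩ := Nat.find_spec hex
  exact ⟨⟨Nat.find hex, q, hq, fun k q' hq' => Nat.find_min' hex ⟨q', hq'⟩⟩⟩

theorem ne_of_mem_of_notMem {a : Fin n} (ha : a ∈ z.1) (hp : a ∉ p.1) : z ≠ p :=
  fun h => hp (h ▸ ha)

theorem adj_of_inter_eq (hc : c.card + 2 = d) {a : Fin n} (ha : a ∉ c) (hne : z ≠ p)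
    (h : z.1 ∩ p.1 = insert a c) : (adjGraph n d V).Adj z p :=
  ⟨hne, by rw [h, card_insert_of_notMem ha]; omega⟩

namespace LinkGeodesic

variable (g : LinkGeodesic V c x y) {i j : ℕ}

theorem eq_zero_of_mem_left (hi : i ≤ g.length) (h : g.point i ∈ x.1) : i = 0 := by
  have := g.length_le _ _ (g.isLinkChain.drop hi h)
  omega

theorem eq_length_of_mem_right (hi : i ≤ g.length) (h : g.point i ∈ y.1) : i = g.length :=
  le_antisymm hi (g.length_le _ _ (g.isLinkChain.take hi h))

theorem point_notMem_left (hi0 : i ≠ 0) (hi : i ≤ g.length) : g.point i ∉ x.1 :=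
  fun h => hi0 (g.eq_zero_of_mem_left hi h)

theorem point_notMem_right (hi : i < g.length) : g.point i ∉ y.1 :=
  fun h => hi.ne (g.eq_length_of_mem_right hi.le h)

theorem point_ne (hi : i ≤ g.length) (hj : j ≤ g.length) (hij : i ≠ j) :
    g.point i ≠ g.point j := by
  intro heq
  rcases Nat.lt_or_gt_of_ne hij with h | h
  · have := g.length_le _ _ (g.isLinkChain.shortcut h hj heq)
    omega
  · have := g.length_le _ _ (g.isLinkChain.shortcut h hi heq.symm)
    omega

theorem one_le_length (hxy : Disjoint (x.1 \ c) (y.1 \ c)) : 1 ≤ g.length := by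
  by_contra! h
  have hchain := g.isLinkChain
  rw [Nat.lt_one_iff.1 h] at hchain
  exact disjoint_left.1 hxy (mem_sdiff.2 ⟨hchain.start_mem, hchain.notMem 0 le_rfl⟩)
    (mem_sdiff.2 ⟨hchain.end_mem, hchain.notMem 0 le_rfl⟩)

def vertex (i : ℕ) (hi : i < g.length) : {s : Finset (Fin n) // s ∈ V} :=
  ⟨insert (g.point i) (insert (g.point (i + 1)) c), g.isLinkChain.insert_mem i hi⟩

theorem subset_vertex (hi : i < g.length) : c ⊆ (g.vertex i hi).1 :=
  (subset_insert _ _).trans (subset_insert _ _)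

theorem point_mem_vertex (hi : i < g.length) : g.point i ∈ (g.vertex i hi).1 :=
  mem_insert_self _ _

theorem point_succ_mem_vertex (hi : i < g.length) : g.point (i + 1) ∈ (g.vertex i hi).1 :=
  mem_insert_of_mem (mem_insert_self _ _)

theorem joined_vertex (hc : c.card + 2 = d) (hcx : c ⊆ x.1) :
    ∀ i (hi : i < g.length), Joined d c (i + 1) x (g.vertex i hi)
  | 0, hi => by
    have h1 : g.point 1 ∉ x.1 := g.point_notMem_left one_ne_zero hi
    exact .of_adj (adj_of_inter_eq hc (g.isLinkChain.notMem 0 (by omega))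
      (ne_of_mem_of_notMem (g.point_succ_mem_vertex hi) h1).symm
      (inter_insert_insert_eq g.isLinkChain.start_mem h1 hcx)) hcx (g.subset_vertex hi)
  | i + 1, hi => by
    have hi' : i < g.length := by omega
    have hne : g.point i ∉ insert (g.point (i + 1)) (insert (g.point (i + 1 + 1)) c) := by
      simp only [mem_insert, not_or]
      exact ⟨g.point_ne (by omega) (by omega) (by omega),
        g.point_ne (by omega) (by omega) (by omega), g.isLinkChain.notMem i (by omega)⟩
    have hinter : insert (g.point i) (insert (g.point (i + 1)) c) ∩
        insert (g.point (i + 1)) (insert (g.point (i + 1 + 1)) c) =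
          insert (g.point (i + 1)) c := by
      rw [insert_inter_of_notMem hne, insert_inter_of_mem (mem_insert_self _ _),
        inter_eq_left.2 ((subset_insert _ _).trans (subset_insert _ _))]
    have hadj : (adjGraph n d V).Adj (g.vertex i hi') (g.vertex (i + 1) hi) :=
      adj_of_inter_eq hc (g.isLinkChain.notMem (i + 1) (by omega))
        (ne_of_mem_of_notMem (g.point_mem_vertex hi') hne) hinter
    exact (joined_vertex hc hcx i hi').trans
      (.of_adj hadj (g.subset_vertex hi') (g.subset_vertex hi))

theorem joined (hc : c.card + 2 = d) (hcx : c ⊆ x.1) (hcy : c ⊆ y.1)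
    (hxy : Disjoint (x.1 \ c) (y.1 \ c)) : Joined d c (g.length + 1) x y := by
  have := g.one_le_length hxy
  obtain ⟨i, hi⟩ : ∃ i, i + 1 = g.length := ⟨g.length - 1, by omega⟩
  have hlt : i < g.length := by omega
  have hend : g.point (i + 1) ∈ y.1 := hi ▸ g.isLinkChain.end_mem
  have hi_y : g.point i ∉ y.1 := g.point_notMem_right hlt
  have hinter : insert (g.point i) (insert (g.point (i + 1)) c) ∩ y.1 =
      insert (g.point (i + 1)) c := by
    rw [inter_comm, Finset.insert_comm, inter_insert_insert_eq hend hi_y hcy]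
  have hadj : (adjGraph n d V).Adj (g.vertex i hlt) y :=
    adj_of_inter_eq hc (g.isLinkChain.notMem (i + 1) (by omega))
      (ne_of_mem_of_notMem (g.point_mem_vertex hlt) hi_y) hinter
  exact ((g.joined_vertex hc hcx i hlt).trans
    (.of_adj hadj (g.subset_vertex hlt) hcy)).mono_length (by omega)

/-- The points of `g`, one further point of `x` and one of `y` are distinct and lie outside
`c`. -/
theorem length_add_le (hV : IsDualGraph d n V) (hc : c.card + 2 = d) (hcx : c ⊆ x.1)
    (hcy : c ⊆ y.1) (hxy : Disjoint (x.1 \ c) (y.1 \ c)) : g.length + d + 1 ≤ n := by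
  set A := (range (g.length + 1)).image g.point
  set B := (x.1 \ c) ∪ (y.1 \ c)
  have hA : A.card = g.length + 1 := by
    rw [card_image_of_injOn, card_range]
    intro i hi j hj heq
    by_contra hij
    exact g.point_ne (by simpa [Nat.lt_succ_iff] using hi) (by simpa [Nat.lt_succ_iff] using hj)
      hij heq
  have hB : B.card = 4 := by
    rw [card_union_of_disjoint hxy, card_sdiff_of_subset hcx, card_sdiff_of_subset hcy,
      hV.card_eq x.1 x.2, hV.card_eq y.1 y.2]
    omega
  have hAB : A ∩ B ⊆ {g.point 0, g.point g.length} := by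
    intro t ht
    simp only [A, B, mem_inter, mem_image, mem_range, mem_union, mem_sdiff] at ht
    obtain ⟨⟨i, hi, rfl⟩, h | h⟩ := ht
    · simp [g.eq_zero_of_mem_left (by omega) h.1]
    · simp [g.eq_length_of_mem_right (by omega) h.1]
  have hU : A ∪ B ⊆ cᶜ := by
    intro t ht
    simp only [A, B, mem_union, mem_image, mem_range, mem_sdiff, mem_compl] at ht ⊢
    obtain ⟨i, hi, rfl⟩ | h | h := ht
    exacts [g.isLinkChain.notMem i (by omega), h.2, h.2]
  have := card_union_add_card_inter A B
  have := (card_le_card hAB).trans card_le_two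
  have := card_le_card hU
  rw [card_compl, Fintype.card_fin] at this
  omega

theorem point_mem_compl_union (hc : c.card + 2 = d) (hcx : c ⊆ x.1) (hwc : w ⊆ c)
    (hA : Avoids d w L x (z.1 \ x.1)) (hi0 : i ≠ 0) (hi : i ≤ g.length) (hiL : i ≤ L) :
    g.point i ∈ (x.1 ∪ z.1)ᶜ := by
  obtain ⟨j, rfl⟩ : ∃ j, i = j + 1 := ⟨i - 1, by omega⟩
  have hz := disjoint_left.1 (hA _ (((g.joined_vertex hc hcx j (by omega)).anti hwc).mono_length
    hiL)) (g.point_succ_mem_vertex (by omega))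
  have hx := g.point_notMem_left hi0 hi
  simp only [mem_sdiff, mem_compl, mem_union] at hz ⊢
  tauto

end LinkGeodesic

end Link

section SixMorePoints

variable {d : ℕ} {V : Finset (Finset (Fin (d + 6)))}
  {u v y p m P : {s : Finset (Fin (d + 6)) // s ∈ V}} {b : Fin (d + 6)}
  {c : Finset (Fin (d + 6))}

theorem card_compl_union_add (hV : IsDualGraph d (d + 6) V)
    (x y : {s : Finset (Fin (d + 6)) // s ∈ V}) :
    (x.1 ∪ y.1)ᶜ.card + d = (x.1 ∩ y.1).card + 6 := by
  have := card_union_add_card_inter x.1 y.1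
  have := card_compl (x.1 ∪ y.1)
  have := card_le_univ (x.1 ∪ y.1)
  rw [Fintype.card_fin] at *
  rw [hV.card_eq x.1 x.2, hV.card_eq y.1 y.2] at *
  omega

theorem joined_of_le_card_inter_add_two (hV : IsDualGraph d (d + 6) V)
    (h : d ≤ (u.1 ∩ v.1).card + 2) : Joined d (u.1 ∩ v.1) 6 u v := by
  by_cases h1 : d ≤ (u.1 ∩ v.1).card + 1
  · exact (joined_of_le_card_inter_add_one hV h1).mono_length (by norm_num)
  have hc : (u.1 ∩ v.1).card + 2 = d := by omega
  have huv := disjoint_sdiff_inter_sdiff_inter u.1 v.1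
  obtain ⟨g⟩ := nonempty_linkGeodesic hV hc inter_subset_left inter_subset_right
  have := g.length_add_le hV hc inter_subset_left inter_subset_right huv
  exact (g.joined hc inter_subset_left inter_subset_right huv).mono_length (by omega)

theorem joined_eight_of_not_avoids (hV : IsDualGraph d (d + 6) V)
    (hw : (u.1 ∩ v.1).card + 3 = d) (h : ¬ Avoids d (u.1 ∩ v.1) 2 u (v.1 \ u.1)) :
    Joined d (u.1 ∩ v.1) 8 u v := by
  simp only [Avoids, not_forall, not_disjoint_iff] at h
  obtain ⟨z, hz, b, hbz, hbv⟩ := h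
  have := card_inter_lt_card_inter hz.right hbz hbv
  exact hz.trans ((joined_of_le_card_inter_add_two hV (by omega)).anti
    (subset_inter hz.right inter_subset_right))

theorem card_inter_sdiff_eq_one_of_adj (hV : IsDualGraph d (d + 6) V)
    (hw : (u.1 ∩ v.1).card + 3 = d) (hwp : u.1 ∩ v.1 ⊆ p.1) (hpu : Disjoint p.1 (u.1 \ v.1))
    (hpv : Disjoint p.1 (v.1 \ u.1)) (hwy : u.1 ∩ v.1 ⊆ y.1) (hyv : Disjoint y.1 (v.1 \ u.1))
    (hadj : (adjGraph (d + 6) d V).Adj y p) : (y.1 ∩ (u.1 \ v.1)).card = 1 := by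
  have hSp := card_compl_union_add hV u v
  have hp := card_eq_add_of_inter_subset hwp
  have hy := card_eq_add_of_inter_subset hwy
  rw [disjoint_iff_inter_eq_empty.1 hpu, disjoint_iff_inter_eq_empty.1 hpv, card_empty,
    hV.card_eq p.1 p.2] at hp
  rw [disjoint_iff_inter_eq_empty.1 hyv, card_empty, hV.card_eq y.1 y.2] at hy
  have hpSp : (u.1 ∪ v.1)ᶜ ⊆ p.1 := by
    refine inter_eq_right.1 (eq_of_subset_of_card_le inter_subset_right ?_)
    omega
  have hyp : y.1 ∩ p.1 = (u.1 ∩ v.1) ∪ (y.1 ∩ (u.1 ∪ v.1)ᶜ) := by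
    ext t
    have h1 : t ∈ p.1 → t ∉ u.1 \ v.1 := fun h => disjoint_left.1 hpu h
    have h2 : t ∈ p.1 → t ∉ v.1 \ u.1 := fun h => disjoint_left.1 hpv h
    have h3 := @hwy t
    have h4 := @hwp t
    have h5 := @hpSp t
    simp only [mem_inter, mem_union, mem_sdiff, mem_compl] at h1 h2 h3 h4 h5 ⊢
    tauto
  have := hadj.2
  rw [hyp, card_union_of_disjoint] at this
  · omega
  · rw [Finset.disjoint_left]
    intro t
    simp only [mem_inter, mem_compl, mem_union]
    tauto

/-- The first two interior points of `g` lie outside `u ∪ v`, which has only three points. -/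
theorem LinkGeodesic.card_le_one_of_subset_compl (hV : IsDualGraph d (d + 6) V)
    (hw : (u.1 ∩ v.1).card + 3 = d) {w : Finset (Fin (d + 6))} (hA : Avoids d w 2 u (v.1 \ u.1))
    (hwc : w ⊆ c) (hcu : c ⊆ u.1) (hc : c.card + 2 = d) (g : LinkGeodesic V c u y)
    (hL : 2 ≤ g.length) {T : Finset (Fin (d + 6))} (hT : T ⊆ (u.1 ∪ v.1)ᶜ)
    (h1 : g.point 1 ∉ T) (h2 : g.point 2 ∉ T) : T.card ≤ 1 := by
  have hq : ∀ i, i ≠ 0 → i ≤ 2 → g.point i ∈ (u.1 ∪ v.1)ᶜ := fun i hi0 hi2 =>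
    g.point_mem_compl_union hc hcu hwc hA hi0 (by omega) hi2
  have := card_add_two_le_of_mem_sdiff (g.point_ne (by omega) (by omega) (by norm_num))
    (mem_sdiff.2 ⟨hq 1 one_ne_zero one_le_two, h1⟩)
    (mem_sdiff.2 ⟨hq 2 two_ne_zero le_rfl, h2⟩) hT
  have := card_compl_union_add hV u v
  omega

section Avoiding

variable (hV : IsDualGraph d (d + 6) V) (hw : (u.1 ∩ v.1).card + 3 = d)
  (hA : Avoids d (u.1 ∩ v.1) 2 u (v.1 \ u.1))

include hV hw hA

theorem joined_three_of_card_inter_sdiff_eq_one (hwP : u.1 ∩ v.1 ⊆ P.1)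
    (hPv : Disjoint P.1 (v.1 \ u.1)) (hPu : (P.1 ∩ (u.1 \ v.1)).card = 1) :
    Joined d (u.1 ∩ v.1) 3 u P := by
  obtain ⟨a, ha⟩ := card_eq_one.1 hPu
  have haP : a ∈ P.1 ∩ (u.1 \ v.1) := ha ▸ mem_singleton_self a
  simp only [mem_inter, mem_sdiff] at haP
  set c := insert a (u.1 ∩ v.1) with hcdef
  have hc : c.card + 2 = d := by
    rw [card_insert_of_notMem (by simp [haP.2.2])]
    omega
  have hcu : c ⊆ u.1 := insert_subset haP.2.1 inter_subset_left
  have hcP : c ⊆ P.1 := insert_subset haP.1 hwP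
  have hPc : P.1 \ c ⊆ (u.1 ∪ v.1)ᶜ := by
    intro t ht
    have h1 : t ∈ P.1 ∩ (u.1 \ v.1) → t = a := by rw [ha]; exact mem_singleton.1
    have h2 : t ∈ P.1 → t ∉ v.1 \ u.1 := fun h => disjoint_left.1 hPv h
    simp only [hcdef, mem_sdiff, mem_insert, mem_inter, mem_compl, mem_union] at ht h1 h2 ⊢
    tauto
  have huP : Disjoint (u.1 \ c) (P.1 \ c) := disjoint_left.2 fun t htu htP => by
    have := hPc htP
    simp only [mem_sdiff, mem_compl, mem_union] at this htu
    tauto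
  obtain ⟨g⟩ := nonempty_linkGeodesic hV hc hcu hcP
  suffices g.length ≤ 2 from
    ((g.joined hc hcu hcP huP).anti (subset_insert _ _)).mono_length (by omega)
  by_contra! hL
  have hcount := g.card_le_one_of_subset_compl hV hw hA (subset_insert _ _) hcu hc (by omega) hPc
    (fun h => g.point_notMem_right (by omega) (mem_sdiff.1 h).1)
    (fun h => g.point_notMem_right (by omega) (mem_sdiff.1 h).1)
  rw [card_sdiff_of_subset hcP, hV.card_eq P.1 P.2] at hcount
  omega

theorem card_inter_sdiff_le_one (hwp : u.1 ∩ v.1 ⊆ p.1) (hwm : u.1 ∩ v.1 ⊆ m.1)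
    (hadj : (adjGraph (d + 6) d V).Adj p m) (hm : ¬ Disjoint m.1 (v.1 \ u.1)) :
    (p.1 ∩ (u.1 \ v.1)).card ≤ 1 := by
  by_contra! h
  have := card_inter_eq_add_of_inter_subset hwp
  have hup : Joined d (u.1 ∩ v.1) 1 u p :=
    (joined_of_le_card_inter_add_one hV (by omega)).anti (subset_inter inter_subset_left hwp)
  exact hm (hA m (hup.trans (.of_adj hadj hwp hwm)))

theorem joined_five_and_four (hwp : u.1 ∩ v.1 ⊆ p.1) (hwm : u.1 ∩ v.1 ⊆ m.1)
    (hpv : Disjoint p.1 (v.1 \ u.1)) (hadj : (adjGraph (d + 6) d V).Adj p m)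
    (hpred : p = u ∨ ∃ y : {s : Finset (Fin (d + 6)) // s ∈ V}, u.1 ∩ v.1 ⊆ y.1 ∧
      Disjoint y.1 (v.1 \ u.1) ∧ (adjGraph (d + 6) d V).Adj y p)
    (hpu : (p.1 ∩ (u.1 \ v.1)).card ≤ 1) :
    Joined d (u.1 ∩ v.1) 5 u m ∧
      ((p.1 ∩ (u.1 \ v.1)).Nonempty → Joined d (u.1 ∩ v.1) 4 u m) := by
  have h4 : (p.1 ∩ (u.1 \ v.1)).Nonempty → Joined d (u.1 ∩ v.1) 4 u m := fun hne =>
    (joined_three_of_card_inter_sdiff_eq_one hV hw hA hwp hpv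
      (le_antisymm hpu (card_pos.2 hne))).trans (.of_adj hadj hwp hwm)
  refine ⟨?_, h4⟩
  rcases (p.1 ∩ (u.1 \ v.1)).eq_empty_or_nonempty with h0 | hne
  · have hpu' := disjoint_iff_inter_eq_empty.2 h0
    rcases hpred with rfl | ⟨y, hwy, hyv, hyp⟩
    · obtain ⟨a, ha⟩ := sdiff_nonempty_of_card_inter_lt hV (by omega : (p.1 ∩ v.1).card < d)
      exact absurd ha (disjoint_left.1 hpu' (mem_sdiff.1 ha).1)
    · have hy := joined_three_of_card_inter_sdiff_eq_one hV hw hA hwy hyv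
        (card_inter_sdiff_eq_one_of_adj hV hw hwp hpu' hpv hwy hyv hyp)
      exact (hy.trans (.of_adj hyp hwy hwp)).trans (.of_adj hadj hwp hwm)
  · exact (h4 hne).mono_length (by norm_num)

theorem LinkGeodesic.point_mem_of_five_le_length (hwc : u.1 ∩ v.1 ⊆ c) (hcu : c ⊆ u.1)
    (hc : c.card + 2 = d) (g : LinkGeodesic V c u y) (hL : 5 ≤ g.length) {s : Fin (d + 6)}
    (hsy : s ∈ y.1) (hs : s ∈ (u.1 ∪ v.1)ᶜ) {j : ℕ} (hj3 : 3 ≤ j) (hj4 : j ≤ 4) :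
    g.point j ∈ v.1 := by
  by_contra hjv
  have hjy : g.point j ∉ y.1 := g.point_notMem_right (by omega)
  have hT : {g.point j, s} ⊆ (u.1 ∪ v.1)ᶜ :=
    insert_subset (by simp [g.point_notMem_left (by omega : j ≠ 0) (by omega), hjv])
      (singleton_subset_iff.2 hs)
  have hq : ∀ i, i ≠ 0 → i ≤ 2 → g.point i ∉ ({g.point j, s} : Finset (Fin (d + 6))) :=
    fun i hi0 hi2 => by
      simp only [mem_insert, mem_singleton, not_or]
      exact ⟨g.point_ne (by omega) (by omega) (by omega),
        fun h => g.point_notMem_right (by omega) (h ▸ hsy)⟩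
  have hcount := g.card_le_one_of_subset_compl hV hw hA hwc hcu hc (by omega) hT
    (hq 1 one_ne_zero one_le_two) (hq 2 two_ne_zero le_rfl)
  rw [card_pair (fun h : g.point j = s => hjy (h ▸ hsy))] at hcount
  omega

/-- Otherwise its fourth vertex would be within distance one of `v` and contain `a`. -/
theorem LinkGeodesic.length_le_four (hB : Avoids d (u.1 ∩ v.1) 2 v (u.1 \ v.1))
    (hwc : u.1 ∩ v.1 ⊆ c) (hcu : c ⊆ u.1) (hc : c.card + 2 = d) (g : LinkGeodesic V c u y)
    {s : Fin (d + 6)} (hsy : s ∈ y.1) (hs : s ∈ (u.1 ∪ v.1)ᶜ) {a : Fin (d + 6)}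
    (hac : a ∈ c) (hau : a ∈ u.1 \ v.1) : g.length ≤ 4 := by
  by_contra! hL
  have hmem : ∀ j, 3 ≤ j → j ≤ 4 → g.point j ∈ v.1 \ u.1 := fun j hj3 hj4 =>
    mem_sdiff.2 ⟨g.point_mem_of_five_le_length hV hw hA hwc hcu hc hL hsy hs hj3 hj4,
      g.point_notMem_left (by omega) (by omega)⟩
  have h3L : 3 < g.length := by omega
  set t := g.vertex 3 h3L
  have hwt : u.1 ∩ v.1 ⊆ t.1 := hwc.trans (g.subset_vertex h3L)
  have hpair : {g.point 3, g.point 4} ⊆ t.1 ∩ (v.1 \ u.1) :=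
    insert_subset (mem_inter.2 ⟨g.point_mem_vertex h3L, hmem 3 le_rfl (by norm_num)⟩)
      (singleton_subset_iff.2
        (mem_inter.2 ⟨g.point_succ_mem_vertex h3L, hmem 4 (by norm_num) le_rfl⟩))
  have := card_le_card hpair
  rw [card_pair (g.point_ne (by omega) (by omega) (by norm_num))] at this
  have hvt := card_inter_eq_add_of_inter_subset (show v.1 ∩ u.1 ⊆ t.1 by rwa [inter_comm])
  rw [inter_comm v.1 u.1] at hvt
  have hjoin := (joined_of_le_card_inter_add_one hV (by omega : d ≤ (v.1 ∩ t.1).card + 1)).anti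
    (subset_inter inter_subset_right hwt)
  exact Finset.disjoint_left.1 (hB t (hjoin.mono_length (by norm_num))) (g.subset_vertex h3L hac)
    hau

theorem joined_eight_of_point_mem_sdiff (hB : Avoids d (u.1 ∩ v.1) 2 v (u.1 \ v.1))
    (hwc : u.1 ∩ v.1 ⊆ c) (hcv : c ⊆ v.1) (hc : c.card + 2 = d) (g : LinkGeodesic V c v y)
    (hL : 2 < g.length) (h2 : g.point 2 ∈ (u.1 ∪ v.1)ᶜ) (h3 : g.point 3 ∈ u.1 \ v.1) :
    Joined d (u.1 ∩ v.1) 8 u v := by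
  set t := g.vertex 2 hL
  set c' := insert (g.point 3) (u.1 ∩ v.1) with hc'def
  have hc' : c'.card + 2 = d := by
    rw [card_insert_of_notMem (fun h => (mem_sdiff.1 h3).2 (mem_inter.1 h).2)]
    omega
  have hc'u : c' ⊆ u.1 := insert_subset (mem_sdiff.1 h3).1 inter_subset_left
  have hc't : c' ⊆ t.1 :=
    insert_subset (g.point_succ_mem_vertex hL) (hwc.trans (g.subset_vertex hL))
  have hut : Disjoint (u.1 \ c') (t.1 \ c') := by
    rw [Finset.disjoint_left]
    intro s hsu hst
    have hsc : s ∈ c → s ∈ v.1 := fun h => hcv h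
    simp only [t, LinkGeodesic.vertex, hc'def, mem_sdiff, mem_insert, mem_inter, mem_compl,
      mem_union] at hsu hst h2 hsc
    rcases hst.1 with rfl | rfl | hs <;> tauto
  obtain ⟨g'⟩ := nonempty_linkGeodesic hV hc' hc'u hc't
  have hL' := g'.length_le_four hV hw hA hB (subset_insert _ _) hc'u hc' (g.point_mem_vertex hL)
    h2 (mem_insert_self _ _) h3
  have hvt : Joined d (u.1 ∩ v.1) 3 v t := (g.joined_vertex hc hcv 2 hL).anti hwc
  exact (((g'.joined hc' hc'u hc't hut).anti (subset_insert _ _)).trans hvt.symm).mono_length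
    (by omega)

theorem joined_eight_of_joined_five (hB : Avoids d (u.1 ∩ v.1) 2 v (u.1 \ v.1))
    (hwm : u.1 ∩ v.1 ⊆ m.1) (hmv : (u.1 ∩ v.1).card < (m.1 ∩ v.1).card)
    (hmu : (m.1 ∩ (u.1 \ v.1)).card ≤ 1) (h5 : Joined d (u.1 ∩ v.1) 5 u m)
    (h4 : (m.1 ∩ (u.1 \ v.1)).Nonempty → Joined d (u.1 ∩ v.1) 4 u m) :
    Joined d (u.1 ∩ v.1) 8 u v := by
  by_cases hclose : d ≤ (m.1 ∩ v.1).card + 1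
  · exact (h5.trans ((joined_of_le_card_inter_add_one hV hclose).anti
      (subset_inter hwm inter_subset_right))).mono_length (by norm_num)
  have hc : (v.1 ∩ m.1).card + 2 = d := by rw [inter_comm]; omega
  have hwc : u.1 ∩ v.1 ⊆ v.1 ∩ m.1 := subset_inter inter_subset_right hwm
  obtain ⟨g⟩ := nonempty_linkGeodesic hV hc inter_subset_left inter_subset_right
  have hvm := (g.joined hc inter_subset_left inter_subset_right
    (disjoint_sdiff_inter_sdiff_inter _ _)).anti hwc
  obtain hL | hL := le_or_gt g.length 2
  · exact (h5.trans hvm.symm).mono_length (by omega)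
  -- `m` has one point in `v \ u`, so its two points outside `v ∩ m` lie in `u \ v` or outside
  -- `u ∪ v`; at most one lies in `u \ v`
  have hm := card_eq_add_of_inter_subset hwm
  have hvm' := card_inter_eq_add_of_inter_subset
    (show v.1 ∩ u.1 ⊆ m.1 by rwa [inter_comm])
  have := card_compl_union_add hV u v
  rw [hV.card_eq m.1 m.2] at hm
  rw [inter_comm v.1 u.1] at hvm'
  have hcount := fun T (hT : T ⊆ (u.1 ∪ v.1)ᶜ) => g.card_le_one_of_subset_compl hV
    (by rwa [inter_comm]) hB hwc inter_subset_left hc hL.le (T := T) (by rwa [union_comm])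
  have him : ∀ i, i < g.length → g.point i ∉ m.1 ∩ (u.1 ∪ v.1)ᶜ :=
    fun i hi h => g.point_notMem_right hi (mem_inter.1 h).1
  have hs := hcount _ inter_subset_right (him 1 (by omega)) (him 2 hL)
  obtain hL3 | hL3 := eq_or_lt_of_le (show 3 ≤ g.length by omega)
  · exact ((h4 (card_pos.1 (by omega))).trans hvm.symm).mono_length (by omega)
  have h3v : g.point 3 ∉ v.1 := g.point_notMem_left (by norm_num) hL3.le
  have h2 : g.point 2 ∈ (u.1 ∪ v.1)ᶜ := by
    rw [union_comm]
    exact g.point_mem_compl_union hc inter_subset_left hwc hB two_ne_zero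
      hL.le le_rfl
  by_cases h3u : g.point 3 ∈ u.1
  · exact joined_eight_of_point_mem_sdiff hV hw hA hB hwc inter_subset_left hc g hL h2
      (mem_sdiff.2 ⟨h3u, h3v⟩)
  have hne : ∀ i, i ≠ 0 → i ≤ 2 →
      g.point i ∉ insert (g.point 3) (m.1 ∩ (u.1 ∪ v.1)ᶜ) := fun i hi0 hi2 => by
      rw [mem_insert, not_or]
      exact ⟨g.point_ne (by omega) hL3.le (by omega), him i (by omega)⟩
  have hs' := hcount _ (insert_subset (by simp [h3u, h3v]) inter_subset_right)
    (hne 1 one_ne_zero one_le_two) (hne 2 two_ne_zero le_rfl)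
  rw [card_insert_of_notMem (fun h => g.point_notMem_right hL3 (mem_inter.1 h).1)] at hs'
  omega

theorem joined_eight_of_avoids (hB : Avoids d (u.1 ∩ v.1) 2 v (u.1 \ v.1)) :
    Joined d (u.1 ∩ v.1) 8 u v := by
  obtain ⟨p, m, hwp, hwm, hpv, hmv, hadj, hpred⟩ :=
    exists_adj_first_meet (x := u) (y := v) hV
      (sdiff_nonempty_of_card_inter_lt hV (by rw [inter_comm]; omega))
  obtain ⟨b, hbm, hbv⟩ := not_disjoint_iff.1 hmv
  have hpu := card_inter_sdiff_le_one hV hw hA hwp hwm hadj hmv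
  have hmp : m.1 ∩ (u.1 \ v.1) ⊆ p.1 ∩ (u.1 \ v.1) := by
    have hsub := subset_insert_of_adj hV hadj hbm (fun h => disjoint_left.1 hpv h hbv)
    intro t ht
    have := @hsub t
    simp only [mem_inter, mem_sdiff, mem_insert] at ht hbv this ⊢
    rcases this ht.1 with rfl | h
    · tauto
    · exact ⟨h, ht.2⟩
  obtain ⟨h5, h4⟩ := joined_five_and_four hV hw hA hwp hwm hpv hadj hpred hpu
  exact joined_eight_of_joined_five hV hw hA hB hwm (card_inter_lt_card_inter hwm hbm hbv)
    ((card_le_card hmp).trans hpu) h5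
    fun hne => h4 (hne.mono hmp)

end Avoiding

theorem joined_of_le_card_inter_add_three (hV : IsDualGraph d (d + 6) V)
    (h : d ≤ (u.1 ∩ v.1).card + 3) : Joined d (u.1 ∩ v.1) 8 u v := by
  by_cases h2 : d ≤ (u.1 ∩ v.1).card + 2
  · exact (joined_of_le_card_inter_add_two hV h2).mono_length (by norm_num)
  have hw : (u.1 ∩ v.1).card + 3 = d := by omega
  by_cases hA : Avoids d (u.1 ∩ v.1) 2 u (v.1 \ u.1)
  · by_cases hB : Avoids d (u.1 ∩ v.1) 2 v (u.1 \ v.1)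
    · exact joined_eight_of_avoids hV hw hA hB
    · rw [inter_comm u.1 v.1] at hw hB ⊢
      exact (joined_eight_of_not_avoids hV hw hB).symm
  · exact joined_eight_of_not_avoids hV hw hA

theorem joined_of_le_card_inter_add_four (hV : IsDualGraph d (d + 6) V)
    (h : d ≤ (u.1 ∩ v.1).card + 4) : Joined d (u.1 ∩ v.1) 11 u v := by
  by_cases h3 : d ≤ (u.1 ∩ v.1).card + 3
  · exact (joined_of_le_card_inter_add_three hV h3).mono_length (by norm_num)
  obtain ⟨p, m, hwp, hwm, hpv, hadj, hmv⟩ :=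
    exists_adj_closer hV (by omega : (u.1 ∩ v.1).card < d)
  have hmv8 : Joined d (u.1 ∩ v.1) 8 m v :=
    (joined_of_le_card_inter_add_three hV (by omega)).anti (subset_inter hwm inter_subset_right)
  have hpm : Joined d (u.1 ∩ v.1) 1 p m := .of_adj hadj hwp hwm
  have hwup : u.1 ∩ v.1 ⊆ u.1 ∩ p.1 := subset_inter inter_subset_left hwp
  have hSp := card_compl_union_add hV u v
  have hup := le_card_inter_add_card_compl hV hpv
  by_cases h1 : d ≤ (u.1 ∩ p.1).card + 1
  · exact ((((joined_of_le_card_inter_add_one hV h1).anti hwup).trans hpm).trans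
      hmv8).mono_length (by norm_num)
  have hc : (u.1 ∩ p.1).card + 2 = d := by omega
  have hdisj := disjoint_sdiff_inter_sdiff_inter u.1 p.1
  obtain ⟨g⟩ := nonempty_linkGeodesic hV hc inter_subset_left inter_subset_right
  have hL := g.one_le_length hdisj
  have h1u : g.point 1 ∉ u.1 := g.point_notMem_left one_ne_zero hL
  by_cases h1v : g.point 1 ∈ v.1
  · have hwt := hwup.trans (g.subset_vertex hL)
    have := card_inter_lt_card_inter hwt (g.point_succ_mem_vertex hL) (mem_sdiff.2 ⟨h1v, h1u⟩)
    exact (((g.joined_vertex hc inter_subset_left 0 hL).anti hwup).trans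
      ((joined_of_le_card_inter_add_three hV (by omega)).anti
        (subset_inter hwt inter_subset_right))).mono_length (by norm_num)
  -- `p \ u` fills up the two points outside `u ∪ v`, so `g.point 1 ∈ p` and `g` has length one
  have hpu : p.1 \ u.1 = (u.1 ∪ v.1)ᶜ := by
    refine eq_of_subset_of_card_le (sdiff_subset_compl_union hpv) ?_
    have := card_sdiff_add_card_inter p.1 u.1
    rw [hV.card_eq p.1 p.2, inter_comm] at this
    omega
  have h1p : g.point 1 ∈ p.1 := by
    have h1 : g.point 1 ∈ (u.1 ∪ v.1)ᶜ := by simp [h1u, h1v]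
    rw [← hpu] at h1
    exact (mem_sdiff.1 h1).1
  have := g.eq_length_of_mem_right hL h1p
  exact ((((g.joined hc inter_subset_left inter_subset_right hdisj).anti hwup).trans hpm).trans
    hmv8).mono_length (by omega)

theorem joined_of_le_card_inter_add_five (hV : IsDualGraph d (d + 6) V)
    (h : d ≤ (u.1 ∩ v.1).card + 5) : Joined d (u.1 ∩ v.1) 13 u v := by
  by_cases h4 : d ≤ (u.1 ∩ v.1).card + 4
  · exact (joined_of_le_card_inter_add_four hV h4).mono_length (by norm_num)
  obtain ⟨p, m, hwp, hwm, hpv, hadj, hmv⟩ :=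
    exists_adj_closer hV (by omega : (u.1 ∩ v.1).card < d)
  have := le_card_inter_add_card_compl hV hpv
  have := card_compl_union_add hV u v
  have hup := (joined_of_le_card_inter_add_one hV (by omega : d ≤ (u.1 ∩ p.1).card + 1)).anti
    (subset_inter inter_subset_left hwp)
  have hmv := (joined_of_le_card_inter_add_four hV (by omega : d ≤ (m.1 ∩ v.1).card + 4)).anti
    (subset_inter hwm inter_subset_right)
  exact ((hup.trans (.of_adj hadj hwp hwm)).trans hmv).mono_length (by norm_num)

theorem joined_fourteen (hV : IsDualGraph d (d + 6) V)
    (u v : {s : Finset (Fin (d + 6)) // s ∈ V}) : Joined d (u.1 ∩ v.1) 14 u v := by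
  have := card_compl_union_add hV u v
  by_cases h5 : d ≤ (u.1 ∩ v.1).card + 5
  · exact (joined_of_le_card_inter_add_five hV h5).mono_length (by norm_num)
  obtain ⟨p, m, hwp, hwm, hpv, hadj, hmv⟩ :=
    exists_adj_closer hV (by omega : (u.1 ∩ v.1).card < d)
  have := le_card_inter_add_card_compl hV hpv
  obtain rfl := eq_of_le_card_inter hV (by omega : d ≤ (u.1 ∩ p.1).card)
  have hmv := (joined_of_le_card_inter_add_five hV (by omega : d ≤ (m.1 ∩ v.1).card + 5)).anti
    (subset_inter hwm inter_subset_right)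
  exact ((ReachableWithin.of_adj hadj hwp hwm).trans hmv).mono_length (by norm_num)

end SixMorePoints

end DualGraph

theorem mu_d_dplus6_le_general (d : ℕ)
    (V : Finset (Finset (Fin (d + 6)))) (hV : IsDualGraph d (d + 6) V) :
    (adjGraph (d + 6) d V).diam ≤ 14 :=
  ENat.toNat_le_of_le_natCast <| ediam_le_of_edist_le fun u v =>
    (DualGraph.joined_fourteen hV u v).edist_le

/-- μ(d, d+6) ≤ 14 for all d ≥ 2. -/
theorem mu_d_dplus6_le (d : ℕ) (hd : 2 ≤ d)
    (V : Finset (Finset (Fin (d + 6)))) (hV : IsDualGraph d (d + 6) V) :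
    (adjGraph (d + 6) d V).diam ≤ 14 :=
  mu_d_dplus6_le_general d V hV
end

section
/- μ(3,6) = 3: every dual graph of type (3,6) has diameter at most 3, and there exists a dual graph of type (3,6) whose diameter is exactly 3. -/
open SimpleGraph

/-!
Let `w` be a walk from `u` to `v` all of whose vertices `x` contain `u ∩ v`. Counting
`x ∩ (u ∪ v)` by inclusion–exclusion and bounding `x \ (u ∪ v)` by the complement of `u ∪ v`
gives `|x| + |u| + |v| ≤ |x ∩ u| + |x ∩ v| + n`, so when `n ≤ d + 3` every such `x` meets `u` or
`v` in at least `d - 1` elements, i.e. is within distance one of `u` or of `v`. Then the last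
vertex of `w` near `u` is followed by a vertex near `v`, and `u, v` are at distance at most `3`.

The bound is attained by the path `{0,1,5} – {0,1,3} – {0,2,3} – {0,2,4}`: its ends are neither
adjacent nor have a common neighbour, and every non-adjacent pair meets in `{0}`, which lies in
every vertex.
-/

open Finset

theorem Finset.card_add_card_add_card_le_of_inter_subset {α : Type*} [Fintype α] [DecidableEq α]
    {p u v : Finset α} (h : u ∩ v ⊆ p) :
    #p + #u + #v ≤ #(p ∩ u) + #(p ∩ v) + Fintype.card α := by
  have hcore : p ∩ u ∩ (p ∩ v) = u ∩ v := by
    rw [inter_inter_inter_comm, inter_self, inter_eq_right.mpr h]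
  have hunion : #(p ∩ u) + #(p ∩ v) = #(p ∩ (u ∪ v)) + #(u ∩ v) := by
    rw [← card_union_add_card_inter, ← inter_union_distrib_left, hcore]
  have hp : #(p ∩ (u ∪ v)) + #(p \ (u ∪ v)) = #p := card_inter_add_card_sdiff _ _
  have hout : #(p \ (u ∪ v)) + #(u ∪ v) ≤ Fintype.card α := by
    rw [← card_union_of_disjoint disjoint_sdiff_self_left]
    exact card_le_univ _
  have := card_union_add_card_inter u v
  omega

theorem SimpleGraph.edist_le_three_of_walk {α : Type*} {G : SimpleGraph α} {u a v : α}
    (w : G.Walk a v) (ha : G.edist u a ≤ 1)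
    (h : ∀ x ∈ w.support, G.edist u x ≤ 1 ∨ G.edist x v ≤ 1) : G.edist u v ≤ 3 := by
  induction w with
  | nil => exact ha.trans (by norm_num)
  | @cons a b v hab w ih =>
    rcases h b (by simp) with hb | hb
    · exact ih hb fun x hx => h x (by simp [hx])
    · calc G.edist u v ≤ G.edist u a + G.edist a b + G.edist b v :=
            SimpleGraph.edist_triangle.trans (add_le_add_left SimpleGraph.edist_triangle _)
        _ ≤ 1 + 1 + 1 := by gcongr; exact edist_le_one_iff_adj_or_eq.2 (.inl hab)
        _ = 3 := by norm_num

namespace adjGraph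

variable {n d : ℕ} {V : Finset (Finset (Fin n))}

theorem edist_le_one_of_le_card_inter (hcard : ∀ u ∈ V, #u = d) {a b : {x // x ∈ V}}
    (h : d - 1 ≤ #(a.1 ∩ b.1)) : (adjGraph n d V).edist a b ≤ 1 := by
  rw [edist_le_one_iff_adj_or_eq]
  by_cases hab : a = b
  · exact .inr hab
  refine .inl ⟨hab, le_antisymm ?_ h⟩
  by_contra hlt
  have ha : a.1 ∩ b.1 = a.1 :=
    eq_of_subset_of_card_le inter_subset_left (by rw [hcard _ a.2]; omega)
  exact hab <| Subtype.ext <|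
    eq_of_subset_of_card_le (inter_eq_left.1 ha) (by rw [hcard _ a.2, hcard _ b.2])

theorem three_le_edist {u v : {x // x ∈ V}} (huv : u ≠ v) (hnadj : #(u.1 ∩ v.1) ≠ d - 1)
    (hcommon : ∀ x ∈ V, #(u.1 ∩ x) = d - 1 → #(x ∩ v.1) ≠ d - 1) :
    3 ≤ (adjGraph n d V).edist u v := by
  have hnadj' : ¬(adjGraph n d V).Adj u v := fun h => hnadj h.2
  refine Order.add_one_le_of_lt (two_lt_edist_iff.2 ⟨huv, hnadj', ?_⟩)
  refine Set.eq_empty_of_forall_notMem fun x hx => ?_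
  obtain ⟨hux, hxv⟩ := (mem_commonNeighbors _).1 hx
  exact hcommon x.1 x.2 hux.2 hxv.symm.2

end adjGraph

namespace IsDualGraph

variable {n d : ℕ} {V : Finset (Finset (Fin n))}

theorem of_connected (hcard : ∀ u ∈ V, #u = d) (hconn : (adjGraph n d V).Connected)
    (hcore : ∀ u ∈ V, ∀ v ∈ V, u ≠ v → #(u ∩ v) = d - 1 ∨ ∀ x ∈ V, u ∩ v ⊆ x) :
    IsDualGraph d n V where
  nonempty := let ⟨x⟩ := hconn.nonempty; ⟨x.1, x.2⟩
  card_eq := hcard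
  locally_connected u v := by
    by_cases huv : u = v
    · subst huv
      exact ⟨Walk.nil, by simp⟩
    rcases hcore u.1 u.2 v.1 v.2 (Subtype.coe_ne_coe.2 huv) with hadj | hsub
    · have hadj : (adjGraph n d V).Adj u v := ⟨huv, hadj⟩
      refine ⟨hadj.toWalk, fun x hx => ?_⟩
      rw [hadj.support_toWalk, List.mem_pair] at hx
      rcases hx with rfl | rfl
      exacts [inter_subset_left, inter_subset_right]
    · exact ⟨(hconn u v).some, fun x _ => hsub x.1 x.2⟩

theorem ediam_le_three (h : IsDualGraph d n V) (hn : n ≤ d + 3) :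
    (adjGraph n d V).ediam ≤ 3 := by
  refine ediam_le_of_edist_le fun u v => ?_
  obtain ⟨w, hw⟩ := h.locally_connected u v
  refine edist_le_three_of_walk w (by simp) fun x hx => ?_
  have hcount := card_add_card_add_card_le_of_inter_subset (hw x hx)
  rw [h.card_eq _ x.2, h.card_eq _ u.2, h.card_eq _ v.2, Fintype.card_fin] at hcount
  by_cases hxu : d - 1 ≤ #(x.1 ∩ u.1)
  · left
    rw [edist_comm]
    exact adjGraph.edist_le_one_of_le_card_inter h.card_eq hxu
  · right
    exact adjGraph.edist_le_one_of_le_card_inter h.card_eq (by omega)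

end IsDualGraph

def pathFamily : Finset (Finset (Fin 6)) := {{0, 1, 5}, {0, 1, 3}, {0, 2, 3}, {0, 2, 4}}

theorem adjGraph_pathFamily_connected : (adjGraph 6 3 pathFamily).Connected := by
  let t : Fin 4 → {x // x ∈ pathFamily} := ![⟨{0, 1, 5}, by decide⟩, ⟨{0, 1, 3}, by decide⟩,
    ⟨{0, 2, 3}, by decide⟩, ⟨{0, 2, 4}, by decide⟩]
  have h01 : (adjGraph 6 3 pathFamily).Adj (t 0) (t 1) := ⟨by decide, by decide⟩
  have h12 : (adjGraph 6 3 pathFamily).Adj (t 1) (t 2) := ⟨by decide, by decide⟩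
  have h23 : (adjGraph 6 3 pathFamily).Adj (t 2) (t 3) := ⟨by decide, by decide⟩
  refine (connected_iff_exists_forall_reachable _).2 ⟨t 0, ?_⟩
  rintro ⟨x, hx⟩
  fin_cases hx
  · exact Reachable.refl (t 0)
  · exact h01.reachable
  · exact h01.reachable.trans h12.reachable
  · exact h01.reachable.trans (h12.reachable.trans h23.reachable)

set_option maxRecDepth 4000 in
theorem isDualGraph_pathFamily : IsDualGraph 3 6 pathFamily :=
  .of_connected (by decide) adjGraph_pathFamily_connected (by decide)

theorem adjGraph_pathFamily_diam : (adjGraph 6 3 pathFamily).diam = 3 := by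
  have hlower :
      3 ≤ (adjGraph 6 3 pathFamily).edist ⟨{0, 1, 5}, by decide⟩ ⟨{0, 2, 4}, by decide⟩ :=
    adjGraph.three_le_edist (by decide) (by decide) (by decide)
  have hediam : (adjGraph 6 3 pathFamily).ediam = 3 :=
    le_antisymm (isDualGraph_pathFamily.ediam_le_three le_rfl) (hlower.trans edist_le_ediam)
  rw [diam, hediam]
  rfl

/-- μ(3,6) = 3. -/
theorem mu_three_six :
    (∀ V : Finset (Finset (Fin 6)), IsDualGraph 3 6 V →
      (adjGraph 6 3 V).diam ≤ 3) ∧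
    (∃ V : Finset (Finset (Fin 6)), IsDualGraph 3 6 V ∧
      (adjGraph 6 3 V).diam = 3) :=
  ⟨fun _ hV => ENat.toNat_le_of_le_natCast (hV.ediam_le_three le_rfl),
    pathFamily, isDualGraph_pathFamily, adjGraph_pathFamily_diam⟩
end
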